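/- arXiv:0810.0041 — 6 statements merged into one kernel-verified Lean document; each statement's English description precedes it below -/
import Mathlib

section
/- Every δ-supplement submodule of a module M is δ-coclosed in M. -/
open Submodule

section Defs

universe u v

variable (R : Type u) [Ring R]

/-- A submodule `L` is essential in `M` if it intersects every nonzero submodule nontrivially. -/
def IsEssentialSub {M : Type v} [AddCommGroup M] [Module R M] (L : Submodule R M) : Prop :=
  ∀ K : Submodule R M, K ≠ ⊥ → L ⊓ K ≠ ⊥

/-- A module is singular if it is isomorphic to `N ⧸ L` for some module `N` and
essential submodule `L ≤ N`. -/
def IsSingular (M : Type v) [AddCommGroup M] [Module R M] : Prop :=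
  ∃ (N : Type v) (_ : AddCommGroup N) (_ : Module R N) (L : Submodule R N),
    IsEssentialSub R L ∧ Nonempty ((N ⧸ L) ≃ₗ[R] M)

variable {M : Type v} [AddCommGroup M] [Module R M]

/-- `N` is small in `M`: `N + Z ≠ M` for every proper submodule `Z`. -/
def SmallSub (N : Submodule R M) : Prop :=
  ∀ Z : Submodule R M, Z ≠ ⊤ → N ⊔ Z ≠ ⊤

/-- `N` is δ-small in `M`: `N + Z ≠ M` for every proper submodule `Z` with `M ⧸ Z` singular. -/
def DeltaSmall (N : Submodule R M) : Prop :=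
  ∀ Z : Submodule R M, Z ≠ ⊤ → IsSingular R (M ⧸ Z) → N ⊔ Z ≠ ⊤

/-- `δ(M)`: the sum of all δ-small submodules of `M`. -/
def deltaRad : Submodule R M := sSup {N : Submodule R M | DeltaSmall R N}

/-- The radical: intersection of all maximal submodules. -/
def radM : Submodule R M := sInf {K : Submodule R M | IsCoatom K}

/-- The socle: sum of all simple submodules. -/
def socM : Submodule R M := sSup {S : Submodule R M | IsAtom S}

/-- `N` is a δ-supplement of `K` in `M`: `N + K = M` and `N ∩ K` is δ-small in `N`. -/
def IsDeltaSupplement (N K : Submodule R M) : Prop :=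
  N ⊔ K = ⊤ ∧ DeltaSmall R ((N ⊓ K).comap N.subtype)

/-- `N` is a δ-supplement submodule of `M`. -/
def IsDeltaSupplementSub (N : Submodule R M) : Prop :=
  ∃ K : Submodule R M, IsDeltaSupplement R N K

/-- `N` is a supplement of `K` in `M`: `N + K = M` and `N ∩ K` is small in `N`. -/
def IsSupplement (N K : Submodule R M) : Prop :=
  N ⊔ K = ⊤ ∧ SmallSub R ((N ⊓ K).comap N.subtype)

/-- `M` is δ-supplemented: every submodule has a δ-supplement. -/
def DeltaSupplemented (M : Type v) [AddCommGroup M] [Module R M] : Prop :=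
  ∀ L : Submodule R M, ∃ N : Submodule R M, IsDeltaSupplement R N L

/-- `M` is supplemented: every submodule has a supplement. -/
def Supplemented (M : Type v) [AddCommGroup M] [Module R M] : Prop :=
  ∀ L : Submodule R M, ∃ N : Submodule R M, IsSupplement R N L

/-- `N` is δ-coclosed in `M`: if `X ≤ N`, `N/X` is singular and `N/X ≪_δ M/X`, then `X = N`. -/
def DeltaCoclosed (N : Submodule R M) : Prop :=
  ∀ X : Submodule R M, X ≤ N →
    IsSingular R ↥(N.map X.mkQ) → DeltaSmall R (N.map X.mkQ) → X = N

/-- `N` is coclosed in `M`: if `X ≤ N` and `N/X ≪ M/X`, then `X = N`. -/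
def Coclosed (N : Submodule R M) : Prop :=
  ∀ X : Submodule R M, X ≤ N → SmallSub R (N.map X.mkQ) → X = N

/-- A module is local if it has a largest proper submodule. -/
def LocalModule (M : Type v) [AddCommGroup M] [Module R M] : Prop :=
  ∃ L : Submodule R M, L ≠ ⊤ ∧ ∀ K : Submodule R M, K ≠ ⊤ → K ≤ L

/-- `M` is δ-local if `δ(M)` is δ-small in `M` and `δ(M)` is a maximal submodule. -/
def DeltaLocal (M : Type v) [AddCommGroup M] [Module R M] : Prop :=
  DeltaSmall R (deltaRad R : Submodule R M) ∧ IsCoatom (deltaRad R : Submodule R M)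

end Defs

/-!
Let `N` be a δ-supplement of `K`, and let `X ≤ N` with `N/X` singular and δ-small in `M/X`.
Quotients of singular modules are singular, so a singular δ-small submodule `P` can only satisfy
`P + Z = M` for `Z = M` (the quotient `M/Z` is an image of `P`). Applied to `N/X + (K + X)/X = M/X`
this gives `X + K = M`, hence `N = X + (N ∩ K)` by the modular law. Now `N/X` is a singular
quotient of `N` complementing the δ-small submodule `N ∩ K` of `N`, which forces `X = N`.
-/

universe v

section Singular

variable {R : Type*} [Ring R]

theorem IsSingular.of_surjective {A B : Type v} [AddCommGroup A] [Module R A] [AddCommGroup B]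
    [Module R B] (hA : IsSingular R A) (f : A →ₗ[R] B) (hf : Function.Surjective f) :
    IsSingular R B := by
  obtain ⟨P, _, _, L, hL, ⟨e⟩⟩ := hA
  let g : P →ₗ[R] B := f ∘ₗ e.toLinearMap ∘ₗ L.mkQ
  have hg : Function.Surjective g := hf.comp (e.surjective.comp L.mkQ_surjective)
  have hLg : L ≤ LinearMap.ker g := fun x hx => by
    simp [g, (Submodule.Quotient.mk_eq_zero L).2 hx]
  have hess : IsEssentialSub R (LinearMap.ker g) := fun K hK hbot =>
    hL K hK (le_bot_iff.1 (hbot ▸ inf_le_inf_right K hLg))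
  exact ⟨P, inferInstance, inferInstance, LinearMap.ker g, hess,
    ⟨g.quotKerEquivOfSurjective hg⟩⟩

variable {M : Type v} [AddCommGroup M] [Module R M]

theorem IsSingular.quotient_comap_subtype {N X : Submodule R M}
    (h : IsSingular R (N.map X.mkQ)) : IsSingular R (N ⧸ X.comap N.subtype) := by
  let f : N →ₗ[R] M ⧸ X := X.mkQ ∘ₗ N.subtype
  have hker : LinearMap.ker f = X.comap N.subtype := by
    rw [LinearMap.ker_comp, ker_mkQ]
  have hrange : LinearMap.range f = N.map X.mkQ := by
    rw [LinearMap.range_comp, range_subtype]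
  rw [← hrange] at h
  rw [← hker]
  exact h.of_surjective _ f.quotKerEquivRange.symm.surjective

theorem DeltaSmall.eq_top_of_sup_eq_top {P Z : Submodule R M} (hP : DeltaSmall R P)
    (hZ : IsSingular R (M ⧸ Z)) (h : P ⊔ Z = ⊤) : Z = ⊤ :=
  by_contra fun hne => hP Z hne hZ h

theorem DeltaSmall.eq_top_of_sup_eq_top_of_isSingular {P Z : Submodule R M}
    (hP : DeltaSmall R P) (hs : IsSingular R P) (h : P ⊔ Z = ⊤) : Z = ⊤ := by
  refine hP.eq_top_of_sup_eq_top (hs.of_surjective (Z.mkQ ∘ₗ P.subtype) ?_) h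
  rw [← LinearMap.range_eq_top, LinearMap.range_comp, range_subtype, map_mkQ_eq_top, sup_comm, h]

end Singular

theorem Submodule.comap_subtype_inf_sup_comap_subtype_eq_top {R M : Type*} [Ring R]
    [AddCommGroup M] [Module R M] {N K X : Submodule R M} (hXN : X ≤ N) (hXK : X ⊔ K = ⊤) :
    (N ⊓ K).comap N.subtype ⊔ X.comap N.subtype = ⊤ := by
  apply map_injective_of_injective N.injective_subtype
  have hmod : X ⊔ K ⊓ N = N := by
    rw [← sup_inf_assoc_of_le K hXN, hXK, top_inf_eq]
  rw [Submodule.map_sup, map_comap_subtype, map_comap_subtype, map_top, range_subtype,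
    inf_of_le_right inf_le_left, inf_of_le_right hXN, inf_comm, sup_comm, hmod]

theorem deltaSupplement_is_deltaCoclosed {R : Type*} [Ring R] {M : Type*} [AddCommGroup M]
    [Module R M] (N : Submodule R M) (h : IsDeltaSupplementSub R N) :
    DeltaCoclosed R N := by
  obtain ⟨K, hNK, hsmall⟩ := h
  intro X hXN hsing hdelta
  have hXK : X ⊔ K = ⊤ := by
    rw [← map_mkQ_eq_top]
    refine hdelta.eq_top_of_sup_eq_top_of_isSingular hsing ?_
    rw [← Submodule.map_sup, hNK, Submodule.map_top, range_mkQ]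
  have hX : X.comap N.subtype = ⊤ :=
    hsmall.eq_top_of_sup_eq_top hsing.quotient_comap_subtype
      (comap_subtype_inf_sup_comap_subtype_eq_top hXN hXK)
  exact le_antisymm hXN (comap_subtype_eq_top.1 hX)
end

section
/- If N is a δ-coclosed submodule of M and K ≤ N is δ-small in M, then K is δ-small in N. -/
/-!
Let `Z < N` with `N ⧸ Z` singular and `K + Z = N`, and let `X` be the image of `Z` in `M`.
Then `K + X = N`, so `N/X` is the image of `K` in `M/X`. A surjection carries δ-small
submodules to δ-small ones, because a singular proper quotient of `M/X` is a singular proper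
quotient of `M`; hence `N/X ≪_δ M/X`. As `N/X ≅ N/Z` is singular, δ-coclosedness gives
`X = N`, i.e. `Z = N`.
-/

open Submodule

section

universe u

variable {R : Type*} [Ring R]

-- `A` and `B` share a universe: `IsSingular` looks for its presentation in the universe of its argument.
theorem IsSingular.of_linearEquiv {A B : Type u} [AddCommGroup A] [Module R A] [AddCommGroup B]
    [Module R B] (hA : IsSingular R A) (e : A ≃ₗ[R] B) : IsSingular R B := by
  obtain ⟨N, _, _, L, hL, ⟨e₀⟩⟩ := hA
  exact ⟨N, _, _, L, hL, ⟨e₀.trans e⟩⟩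

noncomputable def Submodule.quotientEquivMapMkQ {M : Type*} [AddCommGroup M] [Module R M]
    (N : Submodule R M) (Z : Submodule R N) : (N ⧸ Z) ≃ₗ[R] N.map (Z.map N.subtype).mkQ :=
  (Submodule.quotEquivOfEq _ _ (by
      rw [LinearMap.ker_comp, Submodule.ker_mkQ,
        Submodule.comap_map_eq_of_injective N.injective_subtype])).trans
    (((Z.map N.subtype).mkQ ∘ₗ N.subtype).quotKerEquivRange.trans
      (LinearEquiv.ofEq _ _ (by rw [LinearMap.range_comp, Submodule.range_subtype])))

section Surjective

variable {M M' : Type*} [AddCommGroup M] [Module R M] [AddCommGroup M'] [Module R M']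
  {f : M →ₗ[R] M'}

noncomputable def Submodule.quotientComapEquivOfSurjective (hf : Function.Surjective f)
    (T : Submodule R M') : (M ⧸ T.comap f) ≃ₗ[R] M' ⧸ T :=
  (Submodule.quotEquivOfEq _ _ (by rw [LinearMap.ker_comp, Submodule.ker_mkQ])).trans
    ((T.mkQ ∘ₗ f).quotKerEquivOfSurjective ((Submodule.mkQ_surjective T).comp hf))

theorem Submodule.sup_comap_eq_top_of_map_sup_eq_top (hf : Function.Surjective f)
    {K : Submodule R M} {T : Submodule R M'} (h : K.map f ⊔ T = ⊤) : K ⊔ T.comap f = ⊤ := by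
  have hker : LinearMap.ker f ≤ K ⊔ T.comap f := (LinearMap.ker_le_comap f).trans le_sup_right
  rw [← sup_eq_left.2 hker, ← Submodule.comap_map_eq, Submodule.map_sup,
    Submodule.map_comap_eq_of_surjective hf, h, Submodule.comap_top]

end Surjective

theorem DeltaSmall.map_of_surjective {M M' : Type u} [AddCommGroup M] [Module R M]
    [AddCommGroup M'] [Module R M'] {K : Submodule R M} (hK : DeltaSmall R K)
    {f : M →ₗ[R] M'} (hf : Function.Surjective f) : DeltaSmall R (K.map f) := by
  intro T hT hTsing hKT
  refine hK (T.comap f) (fun h => hT ?_)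
    (hTsing.of_linearEquiv (Submodule.quotientComapEquivOfSurjective hf T).symm)
    (Submodule.sup_comap_eq_top_of_map_sup_eq_top hf hKT)
  rw [← Submodule.map_comap_eq_of_surjective hf T, h, Submodule.map_top,
    LinearMap.range_eq_top_of_surjective f hf]

end

theorem deltaSmall_of_deltaCoclosed {R : Type*} [Ring R] {M : Type*} [AddCommGroup M]
    [Module R M] (N K : Submodule R M) (hN : DeltaCoclosed R N) (hKN : K ≤ N)
    (hK : DeltaSmall R K) : DeltaSmall R (K.comap N.subtype) := by
  intro Z hZ hZsing hKZ
  set X := Z.map N.subtype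
  have hKX : K ⊔ X = N := by
    simpa only [Submodule.map_sup, Submodule.map_comap_subtype, inf_eq_right.2 hKN,
      Submodule.map_top, Submodule.range_subtype] using congrArg (Submodule.map N.subtype) hKZ
  have hNX : N.map X.mkQ = K.map X.mkQ := by
    rw [← hKX, Submodule.map_sup, Submodule.mkQ_map_self, sup_bot_eq]
  have hXN : Z.map N.subtype = N := hN X (Submodule.map_subtype_le N Z)
    (hZsing.of_linearEquiv (Submodule.quotientEquivMapMkQ N Z))
    (hNX ▸ hK.map_of_surjective X.mkQ_surjective)
  apply hZ
  rw [← Submodule.comap_map_eq_of_injective N.injective_subtype Z, hXN,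
    Submodule.comap_subtype_self]
end

section
/- If N is a δ-supplement submodule of M, then δ(N) = N ∩ δ(M). -/
open Submodule

/-!
For `X ≤ N`, being δ-small in `N` and in `M` agree when `N` is a δ-supplement of some `K`, and
`x ∈ δ(M)` exactly when `Rx ≪_δ M`; applying the first fact to cyclic submodules of `N` gives the
theorem. For the nontrivial direction take `X + Z = N` with `N/Z` singular: either `Z + K = M`,
and then `Z + (N ∩ K) = N` contradicts `N ∩ K ≪_δ N`, or `M/(Z + K)` is a nonzero singular image
of `N/Z` with `X + (Z + K) = M`, contradicting `X ≪_δ M`.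
-/

section DeltaRadical

universe u v

variable {R : Type u} [Ring R]

theorem IsEssentialSub.mono {P : Type v} [AddCommGroup P] [Module R P] {L L' : Submodule R P}
    (hL : IsEssentialSub R L) (h : L ≤ L') : IsEssentialSub R L' :=
  fun K hK hbot => hL K hK (le_bot_iff.mp (hbot ▸ inf_le_inf_right K h))

theorem IsEssentialSub.comap_of_injective {P N : Type v} [AddCommGroup P] [Module R P]
    [AddCommGroup N] [Module R N] {L : Submodule R P} (hL : IsEssentialSub R L)
    {f : N →ₗ[R] P} (hf : Function.Injective f) : IsEssentialSub R (L.comap f) := by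
  intro K hK
  have hKf : K.map f ≠ ⊥ := fun h0 =>
    hK (map_injective_of_injective hf (h0.trans (map_bot f).symm))
  obtain ⟨_, ⟨hyL, k, hk, rfl⟩, hy⟩ := (Submodule.ne_bot_iff _).1 (hL _ hKf)
  exact (Submodule.ne_bot_iff _).2 ⟨k, ⟨hyL, hk⟩, fun hk0 => hy (by rw [hk0, map_zero])⟩

section Singular

variable {M M' : Type v} [AddCommGroup M] [Module R M] [AddCommGroup M'] [Module R M']

theorem IsSingular.of_surjective_s6 (hM : IsSingular R M) (f : M →ₗ[R] M')
    (hf : Function.Surjective f) : IsSingular R M' := by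
  obtain ⟨P, _, _, L, hL, ⟨e⟩⟩ := hM
  let ψ : P →ₗ[R] M' := f ∘ₗ (e : P ⧸ L →ₗ[R] M) ∘ₗ L.mkQ
  have hψ : Function.Surjective ψ := hf.comp (e.surjective.comp L.mkQ_surjective)
  have hLψ : L ≤ LinearMap.ker ψ := by
    rw [← L.ker_mkQ]
    exact LinearMap.ker_le_ker_comp L.mkQ (f ∘ₗ (e : P ⧸ L →ₗ[R] M))
  exact ⟨P, _, _, _, hL.mono hLψ, ⟨ψ.quotKerEquivOfSurjective hψ⟩⟩

theorem IsSingular.of_injective (hM' : IsSingular R M') (f : M →ₗ[R] M')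
    (hf : Function.Injective f) : IsSingular R M := by
  obtain ⟨P, _, _, L, hL, ⟨e⟩⟩ := hM'
  let g : M →ₗ[R] P ⧸ L := (e.symm : M' →ₗ[R] P ⧸ L) ∘ₗ f
  let Q : Submodule R P := (LinearMap.range g).comap L.mkQ
  let φ : Q →ₗ[R] P ⧸ L := L.mkQ ∘ₗ Q.subtype
  have hker : LinearMap.ker φ = L.comap Q.subtype := by
    rw [LinearMap.ker_comp, ker_mkQ]
  have hrange : LinearMap.range φ = LinearMap.range g := by
    rw [LinearMap.range_comp, range_subtype, map_comap_eq_of_surjective L.mkQ_surjective]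
  refine ⟨Q, _, _, _, hker ▸ hL.comap_of_injective Q.injective_subtype, ⟨?_⟩⟩
  exact φ.quotKerEquivRange ≪≫ₗ LinearEquiv.ofEq _ _ hrange ≪≫ₗ
    (LinearEquiv.ofInjective g (e.symm.injective.comp hf)).symm

theorem IsSingular.quotient_of_le {Z W : Submodule R M} (hs : IsSingular R (M ⧸ Z))
    (h : Z ≤ W) : IsSingular R (M ⧸ W) :=
  hs.of_surjective_s6 (factor h) (factor_surjective h)

theorem IsSingular.quotient_comap {Z : Submodule R M'} (hs : IsSingular R (M' ⧸ Z))
    (f : M →ₗ[R] M') : IsSingular R (M ⧸ Z.comap f) := by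
  have hker : Z.comap f = LinearMap.ker (Z.mkQ ∘ₗ f) := by
    rw [LinearMap.ker_comp, ker_mkQ]
  exact hs.of_injective _ (LinearMap.ker_eq_bot.1 (ker_liftQ_eq_bot' _ _ hker))

theorem IsSingular.quotient_map {Z : Submodule R M} {W : Submodule R M'}
    (hs : IsSingular R (M ⧸ Z)) (f : M →ₗ[R] M') (hZW : Z ≤ W.comap f)
    (hf : W ⊔ LinearMap.range f = ⊤) : IsSingular R (M' ⧸ W) := by
  refine hs.of_surjective_s6 (Z.mapQ W f hZW) (LinearMap.range_eq_top.1 ?_)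
  rwa [range_mapQ, map_mkQ_eq_top]

end Singular

theorem Submodule.sup_comap_subtype_eq_top {M : Type v} [AddCommGroup M] [Module R M]
    {N Z : Submodule R M} {X : Submodule R N} (h : X.map N.subtype ⊔ Z = ⊤) :
    X ⊔ Z.comap N.subtype = ⊤ := by
  apply map_injective_of_injective N.injective_subtype
  rw [map_sup, map_comap_subtype, map_subtype_top, inf_comm,
    ← sup_inf_assoc_of_le _ (map_subtype_le N X), h, top_inf_eq]

variable {M : Type v} [AddCommGroup M] [Module R M]

theorem DeltaSmall.mono {X Y : Submodule R M} (hY : DeltaSmall R Y) (h : X ≤ Y) :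
    DeltaSmall R X :=
  fun Z hZ hs hX => hY Z hZ hs (top_unique (hX ▸ sup_le_sup_right h Z))

theorem deltaSmall_bot : DeltaSmall R (⊥ : Submodule R M) :=
  fun Z hZ _ h => hZ (by rwa [bot_sup_eq] at h)

theorem DeltaSmall.sup {X Y : Submodule R M} (hX : DeltaSmall R X) (hY : DeltaSmall R Y) :
    DeltaSmall R (X ⊔ Y) :=
  fun Z hZ hs h => hX (Y ⊔ Z) (hY Z hZ hs) (hs.quotient_of_le le_sup_right) (by rwa [← sup_assoc])

theorem mem_deltaRad_iff {x : M} : x ∈ (deltaRad R : Submodule R M) ↔ DeltaSmall R (R ∙ x) := by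
  refine ⟨fun hx => ?_, fun hx => (le_sSup hx : R ∙ x ≤ deltaRad R) (mem_span_singleton_self x)⟩
  have hdir : DirectedOn (· ≤ ·) {X : Submodule R M | DeltaSmall R X} :=
    fun A hA B hB => ⟨A ⊔ B, hA.sup hB, le_sup_left, le_sup_right⟩
  obtain ⟨X, hX, hxX⟩ := (mem_sSup_of_directed ⟨⊥, deltaSmall_bot⟩ hdir).1 hx
  exact hX.mono ((span_singleton_le_iff_mem x X).2 hxX)

theorem DeltaSmall.map_subtype {N : Submodule R M} {X : Submodule R N} (hX : DeltaSmall R X) :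
    DeltaSmall R (X.map N.subtype) := by
  intro Z hZ hs h
  have hZN : Z.comap N.subtype ≠ ⊤ := fun hN =>
    hZ (top_unique (h ▸ sup_le ((map_subtype_le N X).trans (comap_subtype_eq_top.1 hN)) le_rfl))
  exact hX _ hZN (hs.quotient_comap N.subtype) (sup_comap_subtype_eq_top h)

theorem IsDeltaSupplement.deltaSmall_comap_subtype {N K X : Submodule R M}
    (hNK : IsDeltaSupplement R N K) (hX : DeltaSmall R X) (hXN : X ≤ N) :
    DeltaSmall R (X.comap N.subtype) := by
  obtain ⟨hsup, hδ⟩ := hNK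
  intro Z hZ hs h
  have hXZ : X ⊔ Z.map N.subtype = N := by
    simpa only [Submodule.map_sup, map_comap_subtype, inf_eq_right.2 hXN, map_subtype_top]
      using congrArg (map N.subtype) h
  by_cases hZK : Z.map N.subtype ⊔ K = ⊤
  · refine hδ Z hZ hs ?_
    rw [sup_comm, comap_inf, comap_subtype_self, top_inf_eq]
    exact sup_comap_subtype_eq_top hZK
  · refine hX _ hZK (hs.quotient_map N.subtype ?_ ?_) (by rw [← sup_assoc, hXZ, hsup])
    · exact (le_comap_map _ _).trans (comap_mono le_sup_left)
    · rw [range_subtype]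
      exact top_unique (hsup ▸ sup_le le_sup_right (le_sup_right.trans le_sup_left))

theorem IsDeltaSupplement.deltaSmall_map_subtype_iff {N K : Submodule R M}
    (hNK : IsDeltaSupplement R N K) {X : Submodule R N} :
    DeltaSmall R (X.map N.subtype) ↔ DeltaSmall R X := by
  refine ⟨fun hX => ?_, DeltaSmall.map_subtype⟩
  simpa only [comap_map_eq_of_injective N.injective_subtype]
    using hNK.deltaSmall_comap_subtype hX (map_subtype_le N X)

theorem IsDeltaSupplement.mem_deltaRad_iff {N K : Submodule R M}
    (hNK : IsDeltaSupplement R N K) (y : N) :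
    y ∈ (deltaRad R : Submodule R N) ↔ (y : M) ∈ (deltaRad R : Submodule R M) := by
  rw [_root_.mem_deltaRad_iff, _root_.mem_deltaRad_iff, ← map_subtype_span_singleton,
    hNK.deltaSmall_map_subtype_iff]

end DeltaRadical

theorem deltaRad_of_deltaSupplement {R : Type*} [Ring R] {M : Type*} [AddCommGroup M]
    [Module R M] (N : Submodule R M) (h : IsDeltaSupplementSub R N) :
    Submodule.map N.subtype (deltaRad R : Submodule R N) = N ⊓ deltaRad R := by
  obtain ⟨K, hNK⟩ := h
  ext x
  constructor
  · rintro ⟨y, hy, rfl⟩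
    exact ⟨y.2, (hNK.mem_deltaRad_iff y).1 hy⟩
  · rintro ⟨hxN, hx⟩
    exact ⟨⟨x, hxN⟩, (hNK.mem_deltaRad_iff ⟨x, hxN⟩).2 hx, rfl⟩
end

section
/- Let K be a maximal submodule of M containing Soc(M), and let L be a δ-supplement of K in M. Then L is δ-local, and moreover δ(L) = K ∩ L. -/
open Submodule

/-! A maximal submodule `K` containing the socle is essential: a nonzero `A` with `K ∩ A = 0`
would be a complement of `K`, hence simple, hence inside `Soc(M) ≤ K`. So `M/K` is singular.
Since `L + K = M`, the submodule `N = K ∩ L` of `L` has `L/N ≅ M/K`, which is simple and singular;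
as `N` is δ-small in `L` and maximal, every δ-small submodule of `L` lies in `N`, so `δ(L) = N`. -/

section

variable {R : Type*} [Ring R] {M : Type*} [AddCommGroup M] [Module R M]

universe w in
theorem IsSingular.congr {X Y : Type w} [AddCommGroup X] [Module R X] [AddCommGroup Y] [Module R Y]
    (h : IsSingular R X) (e : X ≃ₗ[R] Y) : IsSingular R Y := by
  obtain ⟨N, _, _, L, hL, ⟨e'⟩⟩ := h
  exact ⟨N, _, _, L, hL, ⟨e'.trans e⟩⟩

theorem isSingular_quotient_of_isEssentialSub {K : Submodule R M} (hK : IsEssentialSub R K) :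
    IsSingular R (M ⧸ K) :=
  ⟨M, inferInstance, inferInstance, K, hK, ⟨LinearEquiv.refl R _⟩⟩

theorem isEssentialSub_of_isCoatom_of_socM_le {K : Submodule R M} (hK : IsCoatom K)
    (hsoc : socM R ≤ K) : IsEssentialSub R K := by
  intro A hA hKA
  have hAK : ¬ A ≤ K := fun h => hA (by rwa [inf_eq_right.mpr h] at hKA)
  have hcompl : IsCompl K A := ⟨disjoint_iff.mpr hKA, hK.not_le_iff_codisjoint.mp hAK⟩
  exact hAK (le_trans (le_sSup (hcompl.isCoatom_iff_isAtom.mp hK)) hsoc)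

noncomputable def quotientComapSubtypeEquivOfSupEqTop {K L : Submodule R M} (h : L ⊔ K = ⊤) :
    (L ⧸ K.comap L.subtype) ≃ₗ[R] M ⧸ K :=
  (quotEquivOfEq _ _ (by rw [LinearMap.ker_comp, ker_mkQ])).trans <|
  (K.mkQ ∘ₗ L.subtype).quotKerEquivOfSurjective <| LinearMap.range_eq_top.mp <| by
    rw [LinearMap.range_comp, range_subtype, map_mkQ_eq_top, sup_comm, h]

theorem isCoatom_comap_subtype_of_sup_eq_top {K L : Submodule R M} (hK : IsCoatom K)
    (h : L ⊔ K = ⊤) : IsCoatom (K.comap L.subtype) :=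
  haveI := isSimpleModule_iff_isCoatom.mpr hK
  isSimpleModule_iff_isCoatom.mp (IsSimpleModule.congr (quotientComapSubtypeEquivOfSupEqTop h))

theorem deltaRad_eq_of_isCoatom_of_deltaSmall {N : Submodule R M} (hN : IsCoatom N)
    (hsing : IsSingular R (M ⧸ N)) (hsmall : DeltaSmall R N) : deltaRad R = N := by
  refine le_antisymm (sSup_le fun S hS => ?_) (le_sSup hsmall)
  by_contra hSN
  exact hS N hN.ne_top hsing (by rw [sup_comm]; exact (hN.not_le_iff_codisjoint.mp hSN).eq_top)

end

theorem deltaSupplement_of_maximal_is_deltaLocal {R : Type*} [Ring R] {M : Type*}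
    [AddCommGroup M] [Module R M] (K L : Submodule R M) (hK : IsCoatom K)
    (hsoc : (socM R : Submodule R M) ≤ K) (hL : IsDeltaSupplement R L K) :
    DeltaLocal R L ∧ Submodule.map L.subtype (deltaRad R : Submodule R L) = K ⊓ L := by
  obtain ⟨hsup, hsmall⟩ := hL
  rw [comap_inf, comap_subtype_self, top_inf_eq] at hsmall
  have hcoatom := isCoatom_comap_subtype_of_sup_eq_top hK hsup
  have hsing : IsSingular R (L ⧸ K.comap L.subtype) :=
    (isSingular_quotient_of_isEssentialSub (isEssentialSub_of_isCoatom_of_socM_le hK hsoc)).congr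
      (quotientComapSubtypeEquivOfSupEqTop hsup).symm
  have hrad := deltaRad_eq_of_isCoatom_of_deltaSmall hcoatom hsing hsmall
  refine ⟨⟨hrad ▸ hsmall, hrad ▸ hcoatom⟩, ?_⟩
  rw [hrad, map_comap_subtype, inf_comm]
end

section
/- Let M be a finitely generated δ-supplemented left R-module. Then M is semilocal (i.e., M/Rad(M) is semisimple) if and only if Soc(M)/(Soc(M) ∩ Rad(M)) is finitely generated. -/
open Submodule

/-!
Let `X = M ⧸ Rad M` and let `S ≤ X` be the image of `Soc M`, so that
`Soc M ⧸ (Soc M ∩ Rad M) ≅ S`. If `X` is semisimple, `S` is a summand of the finitely generated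
module `X`. Conversely, `S` is semisimple, so finite generation makes it Artinian, and
`Rad X = 0`; in this situation a submodule `U` has a complement as soon as `U + V = X` for some
`V` with `U ∩ V ≤ S`. Taking `U = S` shows that `S` is a summand, whence `Rad (X ⧸ S) = 0`. For
an arbitrary `U`, let `V` be the image of a δ-supplement of the preimage of `U`. A maximal
submodule of `M` containing `Soc M` is essential, so the simple quotient it defines is singular
and the δ-small intersection lies inside it; thus `U ∩ V` lies in every maximal submodule
containing `S`, i.e. `U ∩ V ≤ S`.
-/

section ModularLattice

variable {α : Type*} [CompleteLattice α] [IsModularLattice α]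

theorem sup_inf_eq_top_of_not_inf_le {u c m : α} (huc : u ⊔ c = ⊤) (hm : IsCoatom m)
    (hucm : ¬ u ⊓ c ≤ m) : u ⊔ c ⊓ m = ⊤ := by
  have hcod : u ⊓ c ⊔ m = ⊤ := sup_comm m _ ▸ codisjoint_iff.1 (hm.not_le_iff_codisjoint.1 hucm)
  calc u ⊔ c ⊓ m = u ⊔ (u ⊓ c ⊔ c ⊓ m) := by rw [← sup_assoc, sup_inf_self]
    _ = u ⊔ c := by rw [inf_comm c m, ← sup_inf_assoc_of_le m inf_le_right, hcod, top_inf_eq]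
    _ = ⊤ := huc

/-- Shrinking `c` by coatoms strictly decreases `u ⊓ c` while keeping `u ⊔ c = ⊤`; the
descending chain condition below `s` makes `u ⊓ c` reach `⊥`. -/
theorem exists_isCompl_of_sInf_coatoms_eq_bot (hrad : sInf {m : α | IsCoatom m} = ⊥) {s u v : α}
    [WellFoundedLT (Set.Iic s)] (huv : u ⊔ v = ⊤) (hle : u ⊓ v ≤ s) : ∃ c, IsCompl u c := by
  obtain ⟨⟨_, hs⟩, ⟨c, huc, rfl⟩, hmin⟩ := wellFounded_lt.has_min
    {t : Set.Iic s | ∃ c, u ⊔ c = ⊤ ∧ u ⊓ c = t} ⟨⟨u ⊓ v, hle⟩, v, huv, rfl⟩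
  refine ⟨c, disjoint_iff.2 ?_, codisjoint_iff.2 huc⟩
  by_contra hne
  obtain ⟨m, hm, hucm⟩ : ∃ m, IsCoatom m ∧ ¬ u ⊓ c ≤ m := by
    by_contra! h
    exact hne (le_bot_iff.1 (hrad ▸ le_sInf h))
  refine hmin ⟨u ⊓ (c ⊓ m), (inf_le_inf_left u inf_le_left).trans hs⟩
    ⟨c ⊓ m, sup_inf_eq_top_of_not_inf_le huc hm hucm, rfl⟩ ?_
  exact (inf_le_inf_left u inf_le_left).lt_of_not_ge
    fun h => hucm (h.trans (inf_le_right.trans inf_le_right))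

end ModularLattice

section Jacobson

variable {R : Type*} [Ring R] {X : Type*} [AddCommGroup X] [Module R X]

theorem Module.exists_isCompl_of_jacobson_eq_bot (hX : Module.jacobson R X = ⊥)
    {S U V : Submodule R X} [IsArtinian R S] (hUV : U ⊔ V = ⊤) (hle : U ⊓ V ≤ S) :
    ∃ C, IsCompl U C :=
  haveI := S.mapIic.symm.toOrderEmbedding.wellFoundedLT
  exists_isCompl_of_sInf_coatoms_eq_bot hX hUV hle

theorem Module.jacobson_quotient_eq_bot_of_isCompl (hX : Module.jacobson R X = ⊥)
    {S C : Submodule R X} (h : IsCompl S C) : Module.jacobson R (X ⧸ S) = ⊥ :=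
  Module.jacobson_eq_bot_of_injective (C.subtype ∘ₗ (S.quotientEquivOfIsCompl C h).toLinearMap)
    (C.injective_subtype.comp (LinearEquiv.injective _)) hX

theorem Submodule.le_of_forall_isCoatom_le {S D : Submodule R X}
    (hS : Module.jacobson R (X ⧸ S) = ⊥) (hD : ∀ K, IsCoatom K → S ≤ K → D ≤ K) : D ≤ S := by
  intro x hx
  rw [← S.ker_mkQ, LinearMap.mem_ker, ← mem_bot R, ← hS]
  refine mem_sInf.2 fun K hK => hD (comap S.mkQ K) ?_ ?_ hx
  · exact (isCoatom_comap_iff S.mkQ_surjective).2 hK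
  · simpa only [ker_mkQ] using LinearMap.ker_le_comap (p := K) S.mkQ

end Jacobson

section DeltaSupplement

universe w

variable {R : Type*} [Ring R] {M : Type*} [AddCommGroup M] [Module R M]

theorem IsSingular.of_linearEquiv_s14 {P Q : Type w} [AddCommGroup P] [Module R P] [AddCommGroup Q]
    [Module R Q] (h : IsSingular R P) (e : P ≃ₗ[R] Q) : IsSingular R Q :=
  let ⟨N, _, _, L, hL, ⟨f⟩⟩ := h
  ⟨N, _, _, L, hL, ⟨f.trans e⟩⟩

theorem IsEssentialSub.isSingular_quotient {k : Submodule R M} (hk : IsEssentialSub R k) :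
    IsSingular R (M ⧸ k) :=
  ⟨M, _, _, k, hk, ⟨LinearEquiv.refl R _⟩⟩

/-- A nonzero `B` with `k ⊓ B = ⊥` complements `k`, so `B ≅ M ⧸ k` is simple and lies in the
socle, hence in `k`. -/
theorem IsEssentialSub.of_isCoatom_of_socM_le {k : Submodule R M} (hk : IsCoatom k)
    (hsoc : socM R ≤ k) : IsEssentialSub R k := by
  intro B hB hkB
  have hBk : ¬ B ≤ k := fun hle => hB (by rwa [inf_eq_right.2 hle] at hkB)
  have hcompl : IsCompl k B :=
    ⟨disjoint_iff.2 hkB, hk.not_le_iff_codisjoint.1 hBk⟩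
  have : IsSimpleModule R (M ⧸ k) := isSimpleModule_iff_isCoatom.2 hk
  have hBsimple : IsSimpleModule R B := .congr (k.quotientEquivOfIsCompl B hcompl).symm
  exact hBk ((le_sSup (s := {S | IsAtom S}) (isSimpleModule_iff_isAtom.1 hBsimple)).trans hsoc)

theorem IsSingular.quotient_comap_subtype_s14 {k V : Submodule R M} (hk : IsSingular R (M ⧸ k))
    (hVk : V ⊔ k = ⊤) : IsSingular R (V ⧸ comap V.subtype k) := by
  set f := k.mkQ ∘ₗ V.subtype
  have hf : Function.Surjective f := LinearMap.range_eq_top.1 <| by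
    rw [LinearMap.range_comp, range_subtype, map_mkQ_eq_top, sup_comm, hVk]
  have hker : LinearMap.ker f = comap V.subtype k := by rw [LinearMap.ker_comp, ker_mkQ]
  exact hk.of_linearEquiv_s14 ((quotEquivOfEq _ _ hker.symm).trans (f.quotKerEquivOfSurjective hf)).symm

/-- Otherwise `V ⊓ U` and `V ⊓ k` would generate `V` with `V ⧸ (V ⊓ k) ≅ M ⧸ k` singular,
contradicting δ-smallness of `V ⊓ U` in `V`. -/
theorem IsDeltaSupplement.inf_le_of_isCoatom {V U k : Submodule R M}
    (hVU : IsDeltaSupplement R V U) (hk : IsCoatom k) (hsing : IsSingular R (M ⧸ k)) :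
    V ⊓ U ≤ k := by
  by_contra hVUk
  have hcod : V ⊓ U ⊔ k = ⊤ :=
    sup_comm k _ ▸ codisjoint_iff.1 (hk.not_le_iff_codisjoint.1 hVUk)
  have hVk : V ⊔ k = ⊤ := top_unique (hcod ▸ sup_le_sup_right inf_le_left k)
  refine hVU.2 (comap V.subtype k)
    (comap_subtype_eq_top.not.2 fun hle => hVUk (inf_le_left.trans hle))
    (hsing.quotient_comap_subtype_s14 hVk) ?_
  apply map_injective_of_injective V.injective_subtype
  rw [Submodule.map_sup, map_comap_subtype, map_comap_subtype, Submodule.map_top, range_subtype,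
    inf_of_le_right inf_le_left, inf_comm V k, ← sup_inf_assoc_of_le k inf_le_left, hcod,
    top_inf_eq]

end DeltaSupplement

section Semilocal

variable {R : Type*} [Ring R] {M : Type*} [AddCommGroup M] [Module R M]

theorem isSemisimpleModule_map_socM (N : Submodule R M) :
    IsSemisimpleModule R (map N.mkQ (socM R)) := by
  have : IsSemisimpleModule R (socM R : Submodule R M) := by
    rw [socM, sSup_eq_iSup]
    exact isSemisimpleModule_biSup_of_isSemisimpleModule_submodule fun S hS =>
      have := isSimpleModule_iff_isAtom.2 hS
      inferInstance
  rw [← range_subtype (socM R), ← LinearMap.range_comp]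
  exact .range _

theorem finite_quotient_inf_iff_fg_map_mkQ (p N : Submodule R M) :
    Module.Finite R (p ⧸ comap p.subtype (p ⊓ N)) ↔ (map N.mkQ p).FG := by
  set f := N.mkQ ∘ₗ p.subtype
  have hker : LinearMap.ker f = comap p.subtype (p ⊓ N) := by
    rw [LinearMap.ker_comp, ker_mkQ, comap_inf, comap_subtype_self, top_inf_eq]
  have hrange : LinearMap.range f = map N.mkQ p := by rw [LinearMap.range_comp, range_subtype]
  rw [← Module.Finite.iff_fg, Module.Finite.equiv_iff
    ((quotEquivOfEq _ _ hker.symm).trans (f.quotKerEquivRange.trans (.ofEq _ _ hrange)))]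

theorem isSemisimpleModule_quotient_radM (h : DeltaSupplemented R M)
    [IsArtinian R (map (radM R : Submodule R M).mkQ (socM R))] :
    IsSemisimpleModule R (M ⧸ (radM R : Submodule R M)) := by
  set J : Submodule R M := radM R
  set S := map J.mkQ (socM R)
  have hJ : Module.jacobson R (M ⧸ J) = ⊥ := Module.jacobson_quotient_jacobson R M
  obtain ⟨C, hSC⟩ := Module.exists_isCompl_of_jacobson_eq_bot hJ (sup_top_eq S) inf_le_left
  have hJS := Module.jacobson_quotient_eq_bot_of_isCompl hJ hSC
  refine (isSemisimpleModule_iff R _).2 ⟨fun U => ?_⟩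
  obtain ⟨V, hV⟩ := h (comap J.mkQ U)
  refine Module.exists_isCompl_of_jacobson_eq_bot hJ (V := map J.mkQ V) ?_
    (le_of_forall_isCoatom_le hJS fun K hK hSK => ?_)
  · rw [← map_comap_eq_of_surjective J.mkQ_surjective U, ← Submodule.map_sup, sup_comm, hV.1,
      Submodule.map_top, range_mkQ]
  · have hK' : IsCoatom (comap J.mkQ K) := (isCoatom_comap_iff J.mkQ_surjective).2 hK
    have hVK := hV.inf_le_of_isCoatom hK'
      (IsEssentialSub.of_isCoatom_of_socM_le hK' (map_le_iff_le_comap.1 hSK)).isSingular_quotient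
    rw [inf_comm, map_inf_eq_map_inf_comap]
    exact map_le_iff_le_comap.2 hVK

end Semilocal

theorem semilocal_iff_socle_quotient_fg {R : Type*} [Ring R] (M : Type*) [AddCommGroup M]
    [Module R M] [Module.Finite R M] (h : DeltaSupplemented R M) :
    IsSemisimpleModule R (M ⧸ (radM R : Submodule R M)) ↔
      Module.Finite R
        (↥(socM R : Submodule R M) ⧸
          Submodule.comap (socM R : Submodule R M).subtype
            ((socM R : Submodule R M) ⊓ (radM R : Submodule R M))) := by
  rw [finite_quotient_inf_iff_fg_map_mkQ]
  refine ⟨fun _ => IsNoetherian.noetherian _, fun hfg => ?_⟩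
  have := isSemisimpleModule_map_socM (R := R) (radM R : Submodule R M)
  have := Module.Finite.iff_fg.2 hfg
  exact isSemisimpleModule_quotient_radM h
end

section
/- Let M be a module with finitely generated socle and K a maximal submodule of M. If K has a δ-supplement in M, then K has a supplement in M contained in that δ-supplement. -/
open Submodule

/-! Among the submodules `N ≤ H` with `N + K = M` choose one whose trace `N ∩ Soc(M)` is minimal;
this is possible since `Soc(M)` is finitely generated and semisimple, hence Artinian. Such an `N`
is minimal with `N + K = M`, hence a supplement of `K`. Indeed, if `Z ≤ N` and `Z + K = M`, then
`Z + (H ∩ K) = H`, and δ-smallness of `H ∩ K` in `H` splits `H = Z ⊕ Y` with `Y` semisimple (a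
complement of `Z` makes `Z ⊕ Y` essential in `H`, so `H / (Z ⊕ Y)` is singular), so `Y ≤ Soc(M)`.
Minimality gives `N ∩ Soc(M) = Z ∩ Soc(M)`, so `N ∩ Y ≤ Z ∩ Y = 0` and `N = Z ⊕ (N ∩ Y) = Z`. -/

section Lattice

variable {α : Type*}

theorem exists_disjoint_forall_disjoint_sup_eq_bot [CompleteLattice α] [IsModularLattice α]
    [IsCompactlyGenerated α] (a : α) :
    ∃ b, Disjoint a b ∧ ∀ c, Disjoint (a ⊔ b) c → c = ⊥ := by
  obtain ⟨b, -, hb, hmax⟩ := zorn_le_nonempty₀ {b | Disjoint a b}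
    (fun c hc hchain _ _ => ⟨sSup c,
      (hchain.directedOn.disjoint_sSup_right).2 fun _ hb => hc hb, fun _ => le_sSup⟩)
    ⊥ disjoint_bot_right
  refine ⟨b, hb, fun c hc => ?_⟩
  have hcb : c ≤ b :=
    le_sup_right.trans (hmax (hb.disjoint_sup_right_of_disjoint_sup_left hc) le_sup_left)
  exact hc.eq_bot_of_ge (hcb.trans le_sup_right)

theorem complementedLattice_Iic_of_isCompl [Lattice α] [BoundedOrder α] [IsModularLattice α]
    {x y : α} (hxy : IsCompl x y) (h : ∀ z, x ≤ z → ∃ z', IsCompl z z') :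
    ComplementedLattice (Set.Iic y) := by
  refine Set.Iic.complementedLattice_iff.2 fun w hw => ?_
  obtain ⟨w', hw'⟩ := h (w ⊔ x) le_sup_right
  have hcompl := Set.Iic.isCompl_inf_inf_of_isCompl_of_le
    ((hxy.disjoint.symm.mono_left hw).isCompl_sup_right_of_isCompl_sup_left hw') hw
  obtain ⟨hdisj, hsup⟩ := Set.Iic.isCompl_iff.1 hcompl
  dsimp only at hdisj hsup
  rw [inf_eq_right.2 hw] at hdisj hsup
  exact ⟨_, inf_le_left, disjoint_iff.1 hdisj, hsup⟩

theorem le_of_disjoint_of_inf_le [Lattice α] [OrderBot α] [IsModularLattice α] {z n y s : α}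
    (hzn : z ≤ n) (hn : n ≤ z ⊔ y) (hzy : Disjoint z y) (hy : y ≤ s) (hs : n ⊓ s ≤ z) :
    n ≤ z := by
  have hny : n ⊓ y = ⊥ :=
    eq_bot_iff.2 ((le_inf ((inf_le_inf_left n hy).trans hs) inf_le_right).trans hzy.le_bot)
  refine le_of_eq ?_
  calc n = n ⊓ (z ⊔ y) := (inf_eq_left.2 hn).symm
    _ = z ⊔ n ⊓ y := by rw [inf_comm, sup_inf_assoc_of_le y hzn, inf_comm]
    _ = z := by rw [hny, sup_bot_eq]

end Lattice

section DeltaSmall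

variable {R : Type*} [Ring R] {N : Type*} [AddCommGroup N] [Module R N]

theorem IsEssentialSub.isSingular_quotient_s18 {E : Submodule R N} (hE : IsEssentialSub R E) :
    IsSingular R (N ⧸ E) :=
  ⟨N, _, _, E, hE, ⟨LinearEquiv.refl R _⟩⟩

theorem exists_disjoint_isEssentialSub_sup (X : Submodule R N) :
    ∃ Y, Disjoint X Y ∧ IsEssentialSub R (X ⊔ Y) := by
  obtain ⟨Y, hXY, hess⟩ := exists_disjoint_forall_disjoint_sup_eq_bot X
  exact ⟨Y, hXY, fun C hC hEC => hC (hess C (disjoint_iff.2 hEC))⟩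

theorem DeltaSmall.exists_isCompl {L X : Submodule R N} (hL : DeltaSmall R L)
    (hX : X ⊔ L = ⊤) : ∃ Y, IsCompl X Y := by
  obtain ⟨Y, hXY, hess⟩ := exists_disjoint_isEssentialSub_sup X
  have hLXY : L ⊔ (X ⊔ Y) = ⊤ :=
    top_le_iff.1 (hX.ge.trans (sup_le (le_sup_left.trans le_sup_right) le_sup_left))
  have hXY_top : X ⊔ Y = ⊤ := by
    by_contra hne
    exact hL (X ⊔ Y) hne hess.isSingular_quotient_s18 hLXY
  exact ⟨Y, hXY, codisjoint_iff.2 hXY_top⟩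

theorem DeltaSmall.exists_isCompl_isSemisimpleModule {L X : Submodule R N} (hL : DeltaSmall R L)
    (hX : X ⊔ L = ⊤) : ∃ Y, IsCompl X Y ∧ IsSemisimpleModule R Y := by
  obtain ⟨Y, hXY⟩ := hL.exists_isCompl hX
  refine ⟨Y, hXY, (isSemisimpleModule_iff R Y).2 (Y.mapIic.complementedLattice_iff.2 ?_)⟩
  exact complementedLattice_Iic_of_isCompl hXY fun Z hXZ =>
    hL.exists_isCompl (top_le_iff.1 (hX.ge.trans (sup_le_sup_right hXZ L)))

end DeltaSmall

section Socle

variable {R : Type*} [Ring R] {M : Type*} [AddCommGroup M] [Module R M]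

instance isSemisimpleModule_socM : IsSemisimpleModule R (socM R : Submodule R M) := by
  rw [socM, sSup_eq_iSup]
  exact isSemisimpleModule_biSup_of_isSemisimpleModule_submodule fun S hS =>
    haveI := isSimpleModule_iff_isAtom.2 hS
    inferInstance

theorem le_socM_of_isSemisimpleModule (Y : Submodule R M) [IsSemisimpleModule R Y] :
    Y ≤ socM R := by
  rw [← Y.range_subtype, LinearMap.range_eq_map, ← IsSemisimpleModule.sSup_simples_eq_top,
    map_le_iff_le_comap]
  refine sSup_le fun S (hS : IsSimpleModule R S) => map_le_iff_le_comap.1 (le_sSup ?_)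
  exact isSimpleModule_iff_isAtom.1
    (IsSimpleModule.congr (S.equivMapOfInjective _ Y.injective_subtype).symm)

end Socle

section Supplement

variable {R : Type*} [Ring R] {M : Type*} [AddCommGroup M] [Module R M]

theorem exists_mem_forall_le_inf_eq (S : Submodule R M) [IsArtinian R S]
    {s : Set (Submodule R M)} (hs : s.Nonempty) :
    ∃ N ∈ s, ∀ Z ∈ s, Z ≤ N → Z ⊓ S = N ⊓ S := by
  obtain ⟨N, hN, hmin⟩ :=
    (InvImage.wf (fun N : Submodule R M => N.comap S.subtype) wellFounded_lt).has_min s hs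
  refine ⟨N, hN, fun Z hZ hZN => ?_⟩
  have hle : Z.comap S.subtype ≤ N.comap S.subtype := comap_mono hZN
  have heq := congrArg (map S.subtype) (hle.eq_of_not_lt (hmin Z hZ))
  rwa [map_comap_subtype, map_comap_subtype, inf_comm, inf_comm S] at heq

theorem isSupplement_of_minimal {N K : Submodule R M} (hN : Minimal (· ⊔ K = ⊤) N) :
    IsSupplement R N K := by
  refine ⟨hN.prop, fun W hW hNKW => hW ?_⟩
  have hmap : N ⊓ K ⊔ W.map N.subtype = N := by
    simpa only [Submodule.map_sup, map_comap_subtype, Submodule.map_top, range_subtype,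
      inf_left_idem] using congrArg (map N.subtype) hNKW
  have hN_le : N ≤ W.map N.subtype ⊔ K :=
    hmap.ge.trans (sup_le (inf_le_right.trans le_sup_right) le_sup_left)
  have hWK : W.map N.subtype ⊔ K = ⊤ :=
    eq_top_iff.2 (hN.prop.ge.trans (sup_le hN_le le_sup_right))
  simpa only [comap_map_eq_of_injective N.injective_subtype]
    using comap_subtype_eq_top.2 (hN.2 hWK (map_subtype_le N W))

theorem IsDeltaSupplement.exists_le_socM {H K Z : Submodule R M} (hH : IsDeltaSupplement R H K)
    (hZH : Z ≤ H) (hZK : Z ⊔ K = ⊤) : ∃ Y ≤ socM R, Disjoint Z Y ∧ Z ⊔ Y = H := by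
  have hH_le : H ≤ Z ⊔ H ⊓ K := by
    rw [inf_comm H K, ← sup_inf_assoc_of_le K hZH, hZK, top_inf_eq]
  have hsup : Z.comap H.subtype ⊔ (H ⊓ K).comap H.subtype = ⊤ :=
    (submoduleOf_sup_of_le hZH inf_le_left).symm.trans (comap_subtype_eq_top.2 hH_le)
  obtain ⟨Y, hXY, hY⟩ := hH.2.exists_isCompl_isSemisimpleModule hsup
  have := IsSemisimpleModule.congr (Y.equivMapOfInjective _ H.injective_subtype).symm
  have hcompl := Set.Iic.isCompl_iff.1 (H.mapIic.isCompl_iff.1 hXY)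
  simp only [coe_mapIic_apply, map_comap_subtype, inf_eq_right.2 hZH] at hcompl
  exact ⟨_, le_socM_of_isSemisimpleModule _, hcompl⟩

end Supplement

theorem supplement_in_deltaSupplement_general {R : Type*} [Ring R] {M : Type*} [AddCommGroup M]
    [Module R M] (hsoc : (socM R : Submodule R M).FG) (K H : Submodule R M)
    (hH : IsDeltaSupplement R H K) :
    ∃ N : Submodule R M, N ≤ H ∧ IsSupplement R N K := by
  have : Module.Finite R (socM R : Submodule R M) := Module.Finite.iff_fg.2 hsoc
  obtain ⟨N, ⟨hNH, hNK⟩, htrace⟩ := exists_mem_forall_le_inf_eq (socM R)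
    (s := {N | N ≤ H ∧ N ⊔ K = ⊤}) ⟨H, le_rfl, hH.1⟩
  refine ⟨N, hNH, isSupplement_of_minimal ⟨hNK, fun Z hZK hZN => ?_⟩⟩
  have hZH := hZN.trans hNH
  obtain ⟨Y, hYsoc, hZY, hZYH⟩ := hH.exists_le_socM hZH hZK
  exact le_of_disjoint_of_inf_le hZN (hNH.trans hZYH.ge) hZY hYsoc
    ((htrace Z ⟨hZH, hZK⟩ hZN).ge.trans inf_le_left)

theorem supplement_in_deltaSupplement {R : Type*} [Ring R] {M : Type*} [AddCommGroup M]
    [Module R M] (hsoc : (socM R : Submodule R M).FG) (K H : Submodule R M)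
    (hK : IsCoatom K) (hH : IsDeltaSupplement R H K) :
    ∃ N : Submodule R M, N ≤ H ∧ IsSupplement R N K :=
  supplement_in_deltaSupplement_general hsoc K H hH
end
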